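/- Let f ∈ ℂ[z₁,…,zₙ] be a polynomial with the half-plane property. Then there exists a real stable polynomial f̃ ∈ ℝ[z₁,…,zₙ] with supp(f̃) = supp(f). -/

import Mathlib

/-!
Rotating the variables by `-i / w` turns `f` into a stable polynomial `F` with the same support.
For `z` in the upper half-space, restricting `F` to the complex line `s ↦ re z + s • im z` gives a
univariate polynomial without roots in the upper half-plane, and comparing its root factors at
`s = i` and `s = -i` shows `‖F̄ z‖ ≤ ‖F z‖`, where `F̄` has the conjugate coefficients.
By the maximum modulus principle applied to `F̄ / F`, either this inequality is strict everywhere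
or `F̄ = ω F` for a constant `ω`. In both cases the coefficientwise real part
`Re (μ F) = (μ F + μ̄ F̄) / 2` has no zero in the upper half-space, and has the support of `F`, as
soon as `Re (μ a) ≠ 0` for every coefficient `a` of `F`; such a `μ` exists because this excludes
only finitely many directions.
-/

open MvPolynomial ComplexConjugate

theorem Complex.exists_re_mul_ne_zero (s : Finset ℂ) (hs : 0 ∉ s) :
    ∃ μ : ℂ, ∀ a ∈ s, (μ * a).re ≠ 0 := by
  obtain ⟨t, ht⟩ := Infinite.exists_notMem_finset (s.image fun a => a.re / a.im)
  refine ⟨1 + t * Complex.I, fun a ha hre => ?_⟩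
  have hre' : a.re = t * a.im := by simpa [sub_eq_zero] using hre
  by_cases him : a.im = 0
  · have ha0 : a = 0 := Complex.ext (by simpa [him] using hre') him
    exact hs (ha0 ▸ ha)
  · exact ht (Finset.mem_image.mpr ⟨a, ha, by rw [hre', mul_div_cancel_right₀ _ him]⟩)

theorem Complex.norm_conj_sub_le_norm_sub {s r : ℂ} (hs : 0 ≤ s.im) (hr : r.im ≤ 0) :
    ‖conj s - r‖ ≤ ‖s - r‖ := by
  rw [Complex.norm_def, Complex.norm_def]
  gcongr
  simp only [Complex.normSq_apply, Complex.sub_re, Complex.sub_im, Complex.conj_re,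
    Complex.conj_im]
  nlinarith [mul_nonpos_of_nonneg_of_nonpos hs hr]

theorem Complex.infinite_setOf_im_pos : {w : ℂ | 0 < w.im}.Infinite :=
  infinite_of_mem_nhds Complex.I ((isOpen_lt continuous_const Complex.continuous_im).mem_nhds
    (by simp))

theorem Polynomial.norm_eval_conj_le {φ : Polynomial ℂ} (hφ : ∀ s, 0 < s.im → φ.eval s ≠ 0)
    {s : ℂ} (hs : 0 ≤ s.im) : ‖φ.eval (conj s)‖ ≤ ‖φ.eval s‖ := by
  have hroots : ∀ r ∈ φ.roots, r.im ≤ 0 := fun r hr => not_lt.mp fun him =>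
    hφ r him (Polynomial.isRoot_of_mem_roots hr)
  rw [(IsAlgClosed.splits φ).eval_eq_prod_roots, (IsAlgClosed.splits φ).eval_eq_prod_roots,
    norm_mul, norm_mul]
  refine mul_le_mul_of_nonneg_left ?_ (norm_nonneg _)
  simp only [← normHom_apply, map_multiset_prod, Multiset.map_map]
  exact Multiset.prod_map_le_prod_map₀ _ _ (fun _ _ => norm_nonneg (_ : ℂ))
    fun r hr => Complex.norm_conj_sub_le_norm_sub hs (hroots r hr)

namespace MvPolynomial

variable {σ R : Type*}

section CommSemiring

variable [CommSemiring R]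

theorem bind₁_C_mul_X_monomial (c a : R) (s : σ →₀ ℕ) :
    bind₁ (fun i => C c * X i) (monomial s a) = monomial s (c ^ s.degree * a) := by
  rw [bind₁_monomial, monomial_eq, Finsupp.prod, Finsupp.degree_apply, map_mul]
  simp only [mul_pow, Finset.prod_mul_distrib, ← map_pow, ← map_prod, Finset.prod_pow_eq_pow_sum]
  ring

theorem coeff_bind₁_C_mul_X (c : R) (p : MvPolynomial σ R) (m : σ →₀ ℕ) :
    coeff m (bind₁ (fun i => C c * X i) p) = c ^ m.degree * coeff m p := by
  classical
  induction p using MvPolynomial.induction_on' with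
  | monomial s a =>
    rw [bind₁_C_mul_X_monomial, coeff_monomial, coeff_monomial]
    split_ifs with h
    · rw [h]
    · rw [mul_zero]
  | add p q hp hq => rw [map_add, coeff_add, coeff_add, hp, hq, mul_add]

theorem support_bind₁_C_mul_X [NoZeroDivisors R] {c : R} (hc : c ≠ 0) (p : MvPolynomial σ R) :
    (bind₁ (fun i => C c * X i) p).support = p.support := by
  ext m
  simp [coeff_bind₁_C_mul_X, pow_ne_zero _ hc]

theorem eval_bind₁_C_mul_X (c : R) (p : MvPolynomial σ R) (z : σ → R) :
    eval z (bind₁ (fun i => C c * X i) p) = eval (c • z) p := by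
  rw [← coe_aeval_eq_eval, AlgHom.coe_toRingHom, aeval_bind₁]
  simp [Pi.smul_def]

theorem eval_aeval_C_add_C_mul_X (x y : σ → R) (p : MvPolynomial σ R) (s : R) :
    (aeval (fun i => Polynomial.C (x i) + Polynomial.C (y i) * Polynomial.X) p).eval s =
      eval (x + s • y) p := by
  rw [aeval_def, polynomial_eval_eval₂]
  congr 1
  · ext a
    simp
  · funext i
    simp only [Polynomial.eval_add, Polynomial.eval_mul, Polynomial.eval_C, Polynomial.eval_X,
      Pi.add_apply, Pi.smul_apply, smul_eq_mul, mul_comm]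

end CommSemiring

theorem eval_map_conj (z : σ → ℂ) (p : MvPolynomial σ ℂ) :
    eval z (map (starRingEnd ℂ) p) = conj (eval (conj z) p) := by
  rw [eval_map, eval, coe_eval₂Hom, ← RingHom.coe_coe, eval₂_comp_left]
  congr
  funext i
  simp

noncomputable def rePart (p : MvPolynomial σ ℂ) : MvPolynomial σ ℝ :=
  .ofCoeff (Finsupp.mapRange Complex.re Complex.zero_re (AddMonoidAlgebra.coeff p))

@[simp]
theorem coeff_rePart (p : MvPolynomial σ ℂ) (m : σ →₀ ℕ) :
    coeff m (rePart p) = (coeff m p).re :=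
  rfl

theorem C_two_mul_map_rePart (p : MvPolynomial σ ℂ) :
    C 2 * map (algebraMap ℝ ℂ) (rePart p) = p + map (starRingEnd ℂ) p := by
  ext m
  simp [coeff_C_mul, coeff_map, Complex.add_conj]

theorem two_mul_aeval_rePart (z : σ → ℂ) (p : MvPolynomial σ ℂ) :
    2 * aeval z (rePart p) = eval z p + eval z (map (starRingEnd ℂ) p) := by
  rw [aeval_def, ← eval_map, ← eval_C (f := z) 2, ← eval_mul, C_two_mul_map_rePart, eval_add]

def upperHalfSpace (σ : Type*) : Set (σ → ℂ) := Set.univ.pi fun _ => {w : ℂ | 0 < w.im}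

theorem isOpen_upperHalfSpace [Finite σ] : IsOpen (upperHalfSpace σ) :=
  isOpen_set_pi Set.finite_univ fun _ _ => isOpen_lt continuous_const Complex.continuous_im

theorem convex_upperHalfSpace : Convex ℝ (upperHalfSpace σ) :=
  convex_pi fun _ _ => convex_halfSpace_im_gt 0

theorem eq_of_eqOn_upperHalfSpace {p q : MvPolynomial σ ℂ}
    (h : ∀ z ∈ upperHalfSpace σ, eval z p = eval z q) : p = q :=
  funext_set _ (fun _ => Complex.infinite_setOf_im_pos) h

def IsStable (p : MvPolynomial σ ℂ) : Prop := ∀ z ∈ upperHalfSpace σ, eval z p ≠ 0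

namespace IsStable

variable {p : MvPolynomial σ ℂ}

theorem ne_zero (hp : p.IsStable) : p ≠ 0 := by
  rintro rfl
  exact hp (fun _ => Complex.I) (fun _ _ => by simp) (map_zero _)

theorem norm_eval_map_conj_le (hp : p.IsStable) {z : σ → ℂ} (hz : z ∈ upperHalfSpace σ) :
    ‖eval z (map (starRingEnd ℂ) p)‖ ≤ ‖eval z p‖ := by
  set x : σ → ℂ := fun i => ((z i).re : ℂ)
  set y : σ → ℂ := fun i => ((z i).im : ℂ)
  set φ : Polynomial ℂ :=
    aeval (fun i => Polynomial.C (x i) + Polynomial.C (y i) * Polynomial.X) p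
  have hφ : ∀ s : ℂ, 0 < s.im → φ.eval s ≠ 0 := by
    intro s hs
    rw [eval_aeval_C_add_C_mul_X]
    refine hp _ fun i _ => ?_
    simpa [x, y] using mul_pos hs (hz i trivial)
  have hI : x + Complex.I • y = z := by
    funext i
    apply Complex.ext <;> simp [x, y]
  have hconjI : x + conj Complex.I • y = conj z := by
    funext i
    apply Complex.ext <;> simp [x, y]
  have := Polynomial.norm_eval_conj_le hφ (s := Complex.I) (by simp)
  rwa [eval_aeval_C_add_C_mul_X, eval_aeval_C_add_C_mul_X, hI, hconjI, ← RCLike.norm_conj,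
    ← eval_map_conj] at this

theorem exists_eq_C_mul_of_norm_eval_eq [Fintype σ] {q : MvPolynomial σ ℂ} (hp : p.IsStable)
    (hle : ∀ z ∈ upperHalfSpace σ, ‖eval z q‖ ≤ ‖eval z p‖) {z₀ : σ → ℂ}
    (hz₀ : z₀ ∈ upperHalfSpace σ) (heq : ‖eval z₀ q‖ = ‖eval z₀ p‖) :
    ∃ ω : ℂ, q = C ω * p := by
  set R : (σ → ℂ) → ℂ := fun z => eval z q / eval z p
  have hdiff (r : MvPolynomial σ ℂ) : DifferentiableOn ℂ (eval · r) (upperHalfSpace σ) :=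
    (AnalyticOnNhd.eval_mvPolynomial r).differentiableOn.mono (Set.subset_univ _)
  have hR : DifferentiableOn ℂ R (upperHalfSpace σ) := by
    simp only [R, div_eq_mul_inv]
    exact (hdiff q).fun_mul ((hdiff p).fun_inv hp)
  have hmax : IsMaxOn (‖R ·‖) (upperHalfSpace σ) z₀ := fun z hz => by
    simp only [R, norm_div, heq, div_self (norm_ne_zero_iff.mpr (hp z₀ hz₀))]
    exact (div_le_one (norm_pos_iff.mpr (hp z hz))).mpr (hle z hz)
  refine ⟨R z₀, eq_of_eqOn_upperHalfSpace fun z hz => ?_⟩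
  have hRz : R z = R z₀ := Complex.eqOn_of_isPreconnected_of_isMaxOn_norm
    convex_upperHalfSpace.isPreconnected isOpen_upperHalfSpace hR hz₀ hmax hz
  rw [eval_mul, eval_C, ← hRz, div_mul_cancel₀ _ (hp z hz)]

end IsStable

theorem add_conj_mul_ne_zero_of_map_conj_eq {p : MvPolynomial σ ℂ} {ω μ : ℂ}
    (hω : map (starRingEnd ℂ) p = C ω * p) {m : σ →₀ ℕ} (hm : (μ * coeff m p).re ≠ 0) :
    μ + conj μ * ω ≠ 0 := by
  have hconj : conj (coeff m p) = ω * coeff m p := by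
    simpa only [coeff_map, coeff_C_mul] using congr(coeff m $hω)
  intro h
  apply hm
  have : ((2 * (μ * coeff m p).re : ℝ) : ℂ) = (μ + conj μ * ω) * coeff m p := by
    rw [← Complex.add_conj, map_mul, hconj]
    ring
  rw [h, zero_mul, Complex.ofReal_eq_zero] at this
  exact (mul_eq_zero.mp this).resolve_left two_ne_zero

theorem IsStable.exists_real_stable_support_eq [Fintype σ] {p : MvPolynomial σ ℂ}
    (hp : p.IsStable) :
    ∃ g : MvPolynomial σ ℝ, (∀ z ∈ upperHalfSpace σ, aeval z g ≠ 0) ∧ g.support = p.support := by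
  classical
  obtain ⟨μ, hμ⟩ := Complex.exists_re_mul_ne_zero (p.support.image (coeff · p))
    (by simp [mem_support_iff])
  have hre : ∀ m ∈ p.support, (μ * coeff m p).re ≠ 0 := fun m hm =>
    hμ _ (Finset.mem_image_of_mem _ hm)
  obtain ⟨m, hm⟩ := p.support_nonempty.mpr hp.ne_zero
  refine ⟨rePart (C μ * p), fun z hz hzero => ?_, ?_⟩
  · have h2 := two_mul_aeval_rePart z (C μ * p)
    simp only [hzero, mul_zero, map_mul, map_C, eval_C] at h2
    rcases (hp.norm_eval_map_conj_le hz).lt_or_eq with hlt | heq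
    · have hμ0 : μ ≠ 0 := by
        rintro rfl
        exact hre m hm (by simp)
      have : ‖conj μ * eval z (map (starRingEnd ℂ) p)‖ < ‖μ * eval z p‖ := by
        rw [norm_mul, norm_mul, Complex.norm_conj]
        gcongr
      rw [eq_neg_of_add_eq_zero_left h2.symm, norm_neg] at this
      exact lt_irrefl _ this
    · obtain ⟨ω, hω⟩ := hp.exists_eq_C_mul_of_norm_eval_eq
        (fun z hz => hp.norm_eval_map_conj_le hz) hz heq
      rw [hω, eval_mul, eval_C, ← mul_assoc, ← add_mul] at h2
      exact mul_ne_zero (add_conj_mul_ne_zero_of_map_conj_eq hω (hre m hm)) (hp z hz) h2.symm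
  · ext m
    simp only [mem_support_iff, coeff_rePart, coeff_C_mul]
    exact ⟨fun h hm => h (by simp [hm]), fun h => hre m (mem_support_iff.mpr h)⟩

theorem isStable_bind₁_C_mul_X_of_re_mul_pos {f : MvPolynomial σ ℂ} {w : ℂ} (hw : w ≠ 0)
    (hf : ∀ z : σ → ℂ, (∀ i, 0 < (w * z i).re) → eval z f ≠ 0) :
    (bind₁ (fun i => C (-Complex.I / w) * X i) f).IsStable := fun z hz => by
  rw [eval_bind₁_C_mul_X]
  refine hf _ fun i => ?_
  have hrot : w * ((-Complex.I / w) • z) i = -Complex.I * z i := by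
    rw [Pi.smul_apply, smul_eq_mul, ← mul_assoc, mul_div_cancel₀ _ hw]
  rw [hrot, neg_mul, Complex.neg_re, Complex.I_mul_re, neg_neg]
  exact hz i trivial

end MvPolynomial

/-- If `f` has the half-plane property then there is a real stable polynomial
with the same support. -/
theorem stmt_19 {n : ℕ} (f : MvPolynomial (Fin n) ℂ)
    (hpp : ∃ w : ℂ, w ≠ 0 ∧ ∀ z : Fin n → ℂ, (∀ i, 0 < (w * z i).re) → eval z f ≠ 0) :
    ∃ g : MvPolynomial (Fin n) ℝ,
      (∀ z : Fin n → ℂ, (∀ i, 0 < (z i).im) → aeval z g ≠ 0) ∧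
      g.support = f.support := by
  obtain ⟨w, hw, hf⟩ := hpp
  obtain ⟨g, hg, hsupp⟩ :=
    (isStable_bind₁_C_mul_X_of_re_mul_pos hw hf).exists_real_stable_support_eq
  refine ⟨g, fun z hz => hg z fun i _ => hz i, ?_⟩
  rw [hsupp, support_bind₁_C_mul_X (div_ne_zero (neg_ne_zero.mpr Complex.I_ne_zero) hw)]
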